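/- arXiv:2002.05516 — 2 statements merged into one kernel-verified Lean document; each statement's English description precedes it below -/
import Mathlib

section
/- Let each f_i : ℝ^d → ℝ be differentiable, L-smooth and μ-strongly convex with μ > 0, and let λ > 0. Let x(λ) be the unique minimizer of F = f + λψ with block average x̄(λ), let x(0) be the vector of the individual minimizers of the f_i, let P(z) = (1/n)·Σ_{i=1}^n f_i(z), and let x(∞) have all blocks equal to the unique minimizer of P. Then ‖∇P(x̄(λ))‖² ≤ (2L²/λ)·(f(x(∞)) − f(x(0))). -/
/-!
Since `ψ` is invariant under adding the same vector to every block, minimality of `F` at `x(λ)`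
along these consensus directions forces `Σᵢ ∇fᵢ(xᵢ(λ)) = 0`. Hence
`∇P(x̄) = (1/n) Σᵢ (∇fᵢ(x̄) - ∇fᵢ(xᵢ))`, whose squared norm is at most
`(L²/n) Σᵢ ‖xᵢ - x̄‖² = 2L² ψ(x(λ))` by Cauchy–Schwarz and smoothness. Comparing `F(x(λ))` with
`F` at the consensus point `x(∞)`, where `ψ` vanishes, gives
`λ ψ(x(λ)) ≤ f(x(∞)) - f(x(λ)) ≤ f(x(∞)) - f(x(0))`.
-/

open scoped BigOperators
open Finset

noncomputable section

/-- `Vec d` is the Euclidean space `ℝ^d`. -/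
abbrev Vec (d : ℕ) := EuclideanSpace ℝ (Fin d)

/-- `Blk n d` is `ℝ^{nd}`, viewed as `n`-tuples of vectors in `ℝ^d`
with the Euclidean norm `‖x‖² = Σᵢ ‖xᵢ‖²`. -/
abbrev Blk (n d : ℕ) := PiLp 2 (fun _ : Fin n => Vec d)

/-- the block average `x̄ = (1/n) Σᵢ xᵢ`. -/
def blkAvg {n d : ℕ} (x : Blk n d) : Vec d := (n : ℝ)⁻¹ • ∑ i, x i

/-- `f(x) = (1/n) Σᵢ fᵢ(xᵢ)`. -/
def fTot {n d : ℕ} (f : Fin n → Vec d → ℝ) (x : Blk n d) : ℝ :=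
  (n : ℝ)⁻¹ * ∑ i, f i (x i)

/-- `ψ(x) = (1/(2n)) Σᵢ ‖xᵢ - x̄‖²`. -/
def psi {n d : ℕ} (x : Blk n d) : ℝ :=
  (2 * n : ℝ)⁻¹ * ∑ i, ‖x i - blkAvg x‖ ^ 2

/-- `F(x) = f(x) + λ ψ(x)`. -/
def FF {n d : ℕ} (f : Fin n → Vec d → ℝ) (lam : ℝ) (x : Blk n d) : ℝ :=
  fTot f x + lam * psi x

/-- the gradient of `f`: its `i`-th block is `(1/n) ∇fᵢ(xᵢ)`, where `g i` is
the gradient of `fᵢ`. -/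
def gradTot {n d : ℕ} (g : Fin n → Vec d → Vec d) (x : Blk n d) : Blk n d :=
  WithLp.toLp 2 (fun i => (n : ℝ)⁻¹ • g i (x i))

/-- the gradient of `ψ`: its `i`-th block is `(1/n) (xᵢ - x̄)`. -/
def gradPsi {n d : ℕ} (x : Blk n d) : Blk n d :=
  WithLp.toLp 2 (fun i => (n : ℝ)⁻¹ • (x i - blkAvg x))

lemma norm_sum_sq_le_card_mul_sum_norm_sq {ι E : Type*} [SeminormedAddCommGroup E]
    (s : Finset ι) (v : ι → E) : ‖∑ i ∈ s, v i‖ ^ 2 ≤ #s * ∑ i ∈ s, ‖v i‖ ^ 2 :=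
  (pow_le_pow_left₀ (norm_nonneg _) (norm_sum_le _ _) 2).trans (sq_sum_le_card_mul_sum_sq ..)

lemma sum_gradient_eq_zero_of_forall_sum_le {ι E : Type*} [Fintype ι] [NormedAddCommGroup E]
    [InnerProductSpace ℝ E] [CompleteSpace E] {f : ι → E → ℝ} {g : ι → E → E}
    (hgrad : ∀ i x, HasGradientAt (f i) (g i x) x) {a : ι → E}
    (hmin : ∀ z, ∑ i, f i (a i) ≤ ∑ i, f i (a i + z)) : ∑ i, g i (a i) = 0 := by
  have hderiv : HasFDerivAt (fun z => ∑ i, f i (a i + z))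
      (∑ i, InnerProductSpace.toDual ℝ E (g i (a i))) 0 :=
    HasFDerivAt.fun_sum fun i _ =>
      (hasFDerivAt_comp_add_left (a i)).2 (by simpa using (hgrad i (a i)).hasFDerivAt)
  have hlocal : IsLocalMin (fun z => ∑ i, f i (a i + z)) 0 :=
    Filter.Eventually.of_forall fun z => by simpa using hmin z
  simpa [← map_sum] using hlocal.hasFDerivAt_eq_zero hderiv

section Blocks

variable {n d : ℕ}

lemma blkAvg_add (x y : Blk n d) : blkAvg (x + y) = blkAvg x + blkAvg y := by
  simp [blkAvg, sum_add_distrib, smul_add]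

lemma blkAvg_const (hn : n ≠ 0) (z : Vec d) :
    blkAvg (WithLp.toLp 2 (fun _ => z) : Blk n d) = z := by
  simp [blkAvg, ← Nat.cast_smul_eq_nsmul ℝ, smul_smul, hn]

lemma psi_add_const (hn : n ≠ 0) (x : Blk n d) (z : Vec d) :
    psi (x + WithLp.toLp 2 fun _ => z) = psi x := by
  simp [psi, blkAvg_add, blkAvg_const hn]

lemma psi_const (hn : n ≠ 0) (z : Vec d) : psi (WithLp.toLp 2 (fun _ => z) : Blk n d) = 0 := by
  simp [psi, blkAvg_const hn]

lemma sum_grad_eq_zero_of_forall_FF_le (hn : n ≠ 0) {f : Fin n → Vec d → ℝ}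
    {g : Fin n → Vec d → Vec d} (hgrad : ∀ i (x : Vec d), HasGradientAt (f i) (g i x) x)
    {lam : ℝ} {x : Blk n d} (hmin : ∀ y : Blk n d, FF f lam x ≤ FF f lam y) :
    ∑ i, g i (x i) = 0 :=
  sum_gradient_eq_zero_of_forall_sum_le hgrad fun z => by
    have h := hmin (x + WithLp.toLp 2 fun _ => z)
    simp only [FF, fTot, psi_add_const hn, add_le_add_iff_right] at h
    exact le_of_mul_le_mul_left h (by positivity)

lemma mul_psi_le_of_forall_FF_le (hn : n ≠ 0) {f : Fin n → Vec d → ℝ} {lam : ℝ}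
    {x x0 : Blk n d} (hmin : ∀ y : Blk n d, FF f lam x ≤ FF f lam y)
    (hx0 : ∀ i (z : Vec d), f i (x0 i) ≤ f i z) (z : Vec d) :
    lam * psi x ≤ fTot f (WithLp.toLp 2 (fun _ => z) : Blk n d) - fTot f x0 := by
  have hcons := hmin (WithLp.toLp 2 fun _ => z)
  have hf0 : fTot f x0 ≤ fTot f x :=
    mul_le_mul_of_nonneg_left (sum_le_sum fun i _ => hx0 i (x i)) (by positivity)
  rw [FF, FF, psi_const hn] at hcons
  linarith

lemma norm_avg_grad_sq_le_two_mul_sq_mul_psi {L : ℝ} {g : Fin n → Vec d → Vec d}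
    (hsmooth : ∀ i (x y : Vec d), ‖g i x - g i y‖ ≤ L * ‖x - y‖) {x : Blk n d}
    (hstat : ∑ i, g i (x i) = 0) :
    ‖(n : ℝ)⁻¹ • ∑ i, g i (blkAvg x)‖ ^ 2 ≤ 2 * L ^ 2 * psi x := by
  set m := blkAvg x
  calc ‖(n : ℝ)⁻¹ • ∑ i, g i m‖ ^ 2 = (n : ℝ)⁻¹ ^ 2 * ‖∑ i, (g i m - g i (x i))‖ ^ 2 := by
        rw [sum_sub_distrib, hstat, sub_zero, norm_smul, mul_pow, norm_inv, RCLike.norm_natCast]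
    _ ≤ (n : ℝ)⁻¹ ^ 2 * (n * ∑ i, ‖g i m - g i (x i)‖ ^ 2) := by
        gcongr
        simpa using norm_sum_sq_le_card_mul_sum_norm_sq univ fun i => g i m - g i (x i)
    _ ≤ (n : ℝ)⁻¹ ^ 2 * (n * ∑ i, (L * ‖x i - m‖) ^ 2) := by
        gcongr with i
        rw [norm_sub_rev (x i)]
        exact hsmooth i m (x i)
    _ = 2 * L ^ 2 * psi x := by
        have hinv : (n : ℝ)⁻¹ ^ 2 * n = (n : ℝ)⁻¹ := by grind
        rw [psi, ← mul_assoc, hinv]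
        simp only [mul_pow, ← mul_sum]
        ring

end Blocks

theorem stmt6_general (n d : ℕ) (hn : 0 < n) (L lam : ℝ) (hlam : 0 < lam)
    (f : Fin n → Vec d → ℝ) (g : Fin n → Vec d → Vec d)
    (hgrad : ∀ i (x : Vec d), HasGradientAt (f i) (g i x) x)
    (hsmooth : ∀ i (x y : Vec d), ‖g i x - g i y‖ ≤ L * ‖x - y‖)
    (xlam : Blk n d) (hxlam : ∀ y : Blk n d, FF f lam xlam ≤ FF f lam y)
    (x0 : Blk n d) (hx0 : ∀ i (z : Vec d), f i (x0 i) ≤ f i z)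
    (zinf : Vec d) :
    ‖(n : ℝ)⁻¹ • ∑ i, g i (blkAvg xlam)‖ ^ 2 ≤
      (2 * L ^ 2 / lam) * (fTot f (WithLp.toLp 2 (fun _ => zinf) : Blk n d) - fTot f x0) := by
  have hstat := sum_grad_eq_zero_of_forall_FF_le hn.ne' hgrad hxlam
  calc ‖(n : ℝ)⁻¹ • ∑ i, g i (blkAvg xlam)‖ ^ 2
      ≤ 2 * L ^ 2 * psi xlam := norm_avg_grad_sq_le_two_mul_sq_mul_psi hsmooth hstat
    _ = (2 * L ^ 2 / lam) * (lam * psi xlam) := by field_simp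
    _ ≤ _ := by
        gcongr
        exact mul_psi_le_of_forall_FF_le hn.ne' hxlam hx0 zinf

/-- for `λ > 0`, with `xlam` the minimizer of `F = f + λψ`, `x0` the
vector of individual minimizers of the `fᵢ`, and `zinf` the minimizer of
`P(z) = (1/n) Σᵢ fᵢ(z)` (whose gradient at `z` is `(1/n) Σᵢ ∇fᵢ(z)`), one has
`‖∇P(x̄(λ))‖² ≤ (2L²/λ)(f(x(∞)) − f(x(0)))`. -/
theorem stmt6 (n d : ℕ) (hn : 0 < n) (L μ lam : ℝ) (hμ : 0 < μ) (hlam : 0 < lam)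
    (f : Fin n → Vec d → ℝ) (g : Fin n → Vec d → Vec d)
    (hgrad : ∀ i (x : Vec d), HasGradientAt (f i) (g i x) x)
    (hsmooth : ∀ i (x y : Vec d), ‖g i x - g i y‖ ≤ L * ‖x - y‖)
    (hsc : ∀ i, StrongConvexOn Set.univ μ (f i))
    (xlam : Blk n d) (hxlam : ∀ y : Blk n d, FF f lam xlam ≤ FF f lam y)
    (x0 : Blk n d) (hx0 : ∀ i (z : Vec d), f i (x0 i) ≤ f i z)
    (zinf : Vec d)
    (hzinf : ∀ z : Vec d, (n : ℝ)⁻¹ * ∑ i, f i zinf ≤ (n : ℝ)⁻¹ * ∑ i, f i z) :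
    ‖(n : ℝ)⁻¹ • ∑ i, g i (blkAvg xlam)‖ ^ 2 ≤
      (2 * L ^ 2 / lam) * (fTot f (WithLp.toLp 2 (fun _ => zinf) : Blk n d) - fTot f x0) :=
  stmt6_general n d hn L lam hlam f g hgrad hsmooth xlam hxlam x0 hx0 zinf
end
end

section
/- Let each f_i : ℝ^d → ℝ be differentiable, convex and L-smooth, let λ ≥ 0, 0 < p < 1, F = f + λψ, and let x* ∈ ℝ^{nd} be the minimizer of F (so ∇F(x*) = 0). Set 𝓛 = (1/n)·max{L/(1−p), λ/p}. Then for every x ∈ ℝ^{nd}: (1/(1−p))·‖∇f(x) − ∇f(x*)‖² + (λ²/p)·‖∇ψ(x) − ∇ψ(x*)‖² ≤ 2𝓛·(F(x) − F(x*)). -/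
/-!
Since `x*` minimizes `F = f + λψ`, the directional derivatives of `F` at `x*` vanish, so the gap
`F(x) - F(x*)` is the Bregman divergence `D_f(x, x*) + λ D_ψ(x, x*)`. For convex `L`-smooth `fᵢ`,
cocoercivity `‖∇fᵢ a - ∇fᵢ b‖² ≤ 2L D_{fᵢ}(a, b)` controls the first term. As `ψ` is a quadratic
form, `D_ψ(x, x*) = ψ(x - x*)` and `‖∇ψ x - ∇ψ x*‖² = (2/n) ψ(x - x*)` exactly. Weighting the two
bounds by `1/(1-p)` and `λ²/p` produces the constant `𝓛`.
-/

open scoped BigOperators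
open Finset

noncomputable section

open scoped RealInnerProductSpace

section SmoothConvex

variable {E : Type*} [NormedAddCommGroup E] [InnerProductSpace ℝ E] [CompleteSpace E]

theorem HasGradientAt.hasDerivAt_add_smul {h : E → ℝ} {g' x v : E} {t : ℝ}
    (hh : HasGradientAt h g' (x + t • v)) :
    HasDerivAt (fun s : ℝ => h (x + s • v)) ⟪g', v⟫ t := by
  have hline : HasDerivAt (fun s : ℝ => x + s • v) v t := by
    simpa using ((hasDerivAt_id t).smul_const v).const_add x
  simpa [Function.comp_def] using
    (hasGradientAt_iff_hasFDerivAt.1 hh).comp_hasDerivAt t hline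

theorem ConvexOn.add_inner_le_of_hasGradientAt {h : E → ℝ} {g' y : E}
    (hc : ConvexOn ℝ Set.univ h) (hg : HasGradientAt h g' y) (x : E) :
    h y + ⟪g', x - y⟫ ≤ h x := by
  have hline : ∀ s : ℝ, AffineMap.lineMap y x s = y + s • (x - y) := fun s => by
    rw [AffineMap.lineMap_apply_module', add_comm]
  have hconv : ConvexOn ℝ Set.univ fun s : ℝ => h (y + s • (x - y)) := by
    simpa [Function.comp_def, hline] using hc.comp_affineMap (AffineMap.lineMap y x)
  have hder : HasDerivAt (fun s : ℝ => h (y + s • (x - y))) ⟪g', x - y⟫ 0 :=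
    HasGradientAt.hasDerivAt_add_smul (by simpa using hg)
  have := hconv.le_slope_of_hasDerivAt (Set.mem_univ 0) (Set.mem_univ 1) zero_lt_one hder
  simp only [slope_def_field, one_smul, add_sub_cancel, zero_smul, add_zero, sub_zero, div_one]
    at this
  linarith

theorem le_add_inner_add_of_lipschitzWith {h : E → ℝ} {g : E → E} {K : NNReal}
    (hg : ∀ z, HasGradientAt h (g z) z) (hL : LipschitzWith K g) (x y : E) :
    h y ≤ h x + ⟪g x, y - x⟫ + K / 2 * ‖y - x‖ ^ 2 := by
  set v := y - x
  -- `φ' ≤ 0` on `t > 0` by Cauchy–Schwarz and the Lipschitz bound, so `φ 1 ≤ φ 0`.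
  let φ : ℝ → ℝ := fun t => h (x + t • v) - t * ⟪g x, v⟫ - K / 2 * t ^ 2 * ‖v‖ ^ 2
  have hφ : ∀ t, HasDerivAt φ (⟪g (x + t • v) - g x, v⟫ - K * t * ‖v‖ ^ 2) t := fun t => by
    refine (((HasGradientAt.hasDerivAt_add_smul (x := x) (v := v) (hg _)).fun_sub
      ((hasDerivAt_id t).mul_const ⟪g x, v⟫)).fun_sub
      (((hasDerivAt_pow 2 t).const_mul (K / 2 : ℝ)).mul_const (‖v‖ ^ 2))).congr_deriv ?_
    simp only [inner_sub_left]
    ring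
  have hφ_nonpos : ∀ t ∈ interior (Set.Ici (0 : ℝ)),
      ⟪g (x + t • v) - g x, v⟫ - K * t * ‖v‖ ^ 2 ≤ 0 := by
    intro t ht
    rw [interior_Ici] at ht
    have hlip : ‖g (x + t • v) - g x‖ ≤ K * (t * ‖v‖) := by
      simpa [norm_smul, abs_of_pos (Set.mem_Ioi.1 ht)] using hL.norm_sub_le (x + t • v) x
    nlinarith [real_inner_le_norm (g (x + t • v) - g x) v, norm_nonneg v, Set.mem_Ioi.1 ht]
  have hanti : AntitoneOn φ (Set.Ici 0) :=
    antitoneOn_of_hasDerivWithinAt_nonpos (convex_Ici 0)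
      (fun t _ => (hφ t).continuousAt.continuousWithinAt)
      (fun t _ => (hφ t).hasDerivWithinAt) hφ_nonpos
  have hφ01 : φ 1 ≤ φ 0 := hanti (Set.mem_Ici.2 le_rfl) (Set.mem_Ici.2 zero_le_one) zero_le_one
  simp only [φ, v, one_smul, add_sub_cancel, one_mul, one_pow, zero_smul, add_zero, zero_mul,
    sub_zero, zero_pow two_ne_zero, mul_zero] at hφ01
  linarith

theorem ConvexOn.norm_sub_sq_le_of_lipschitzWith {h : E → ℝ} {g : E → E} {K : NNReal}
    (hc : ConvexOn ℝ Set.univ h) (hg : ∀ z, HasGradientAt h (g z) z) (hL : LipschitzWith K g)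
    (x y : E) :
    ‖g x - g y‖ ^ 2 ≤ 2 * K * (h x - h y - ⟪g y, x - y⟫) := by
  rcases eq_or_ne K 0 with rfl | hK
  · have := hL.norm_sub_le x y
    simp_all
  -- Compare `h` at the gradient step `x - K⁻¹ (g x - g y)`: from below by convexity at `y`,
  -- from above by the descent lemma at `x`.
  set w := g x - g y
  have hKpos : (0 : ℝ) < K := by positivity
  have hz_sub_x : x - (K : ℝ)⁻¹ • w - x = -((K : ℝ)⁻¹ • w) := by abel
  have hlower := hc.add_inner_le_of_hasGradientAt (hg y) (x - (K : ℝ)⁻¹ • w)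
  have hupper := le_add_inner_add_of_lipschitzWith hg hL x (x - (K : ℝ)⁻¹ • w)
  rw [hz_sub_x, norm_neg, norm_smul, inner_neg_right, real_inner_smul_right] at hupper
  rw [sub_right_comm, inner_sub_right, real_inner_smul_right] at hlower
  have hw : ⟪g x, w⟫ - ⟪g y, w⟫ = ‖w‖ ^ 2 := by
    rw [← inner_sub_left, real_inner_self_eq_norm_sq]
  have hKinv : ‖(K : ℝ)⁻¹‖ = (K : ℝ)⁻¹ := by simp
  rw [hKinv] at hupper
  field_simp at hupper hlower ⊢
  nlinarith

end SmoothConvex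
section Blocks

variable {n d : ℕ}

theorem sum_sub_blkAvg (x : Blk n d) : ∑ i, (x i - blkAvg x) = 0 := by
  rcases Nat.eq_zero_or_pos n with rfl | hn
  · simp
  rw [Finset.sum_sub_distrib, Finset.sum_const, Finset.card_univ, Fintype.card_fin, blkAvg,
    ← Nat.cast_smul_eq_nsmul ℝ, smul_smul, mul_inv_cancel₀ (by positivity), one_smul, sub_self]

theorem blkAvg_add_smul (x v : Blk n d) (t : ℝ) :
    blkAvg (x + t • v) = blkAvg x + t • blkAvg v := by
  simp only [blkAvg, PiLp.add_apply, PiLp.smul_apply, Finset.sum_add_distrib, ← Finset.smul_sum,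
    smul_add, smul_comm t]

theorem blkAvg_sub (x y : Blk n d) : blkAvg (x - y) = blkAvg x - blkAvg y := by
  simp only [blkAvg, PiLp.sub_apply, Finset.sum_sub_distrib, smul_sub]

theorem gradPsi_sub (x y : Blk n d) : gradPsi x - gradPsi y = gradPsi (x - y) := by
  ext i : 1
  simp only [gradPsi, PiLp.sub_apply, PiLp.toLp_apply, blkAvg_sub, ← smul_sub]
  abel_nf

theorem inner_gradPsi (x v : Blk n d) :
    ⟪gradPsi x, v⟫ = (n : ℝ)⁻¹ * ∑ i, ⟪x i - blkAvg x, v i - blkAvg v⟫ := by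
  have hcentered : ∑ i, ⟪x i - blkAvg x, blkAvg v⟫ = 0 := by
    rw [← sum_inner, sum_sub_blkAvg, inner_zero_left]
  rw [gradPsi, PiLp.inner_apply]
  simp only [real_inner_smul_left, inner_sub_right, Finset.sum_sub_distrib,
    hcentered, ← Finset.mul_sum, sub_zero]

theorem psi_add_smul (x v : Blk n d) (t : ℝ) :
    psi (x + t • v) = psi x + t * ⟪gradPsi x, v⟫ + t ^ 2 * psi v := by
  have hblock : ∀ i, (x + t • v) i - blkAvg (x + t • v) =
      (x i - blkAvg x) + t • (v i - blkAvg v) := fun i => by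
    rw [blkAvg_add_smul, PiLp.add_apply, PiLp.smul_apply]
    module
  simp only [psi, inner_gradPsi, hblock, norm_add_sq_real, real_inner_smul_right, norm_smul,
    Real.norm_eq_abs, mul_pow, sq_abs, Finset.sum_add_distrib, ← Finset.mul_sum, mul_inv]
  ring

theorem norm_gradPsi_sq (x : Blk n d) : ‖gradPsi x‖ ^ 2 = 2 * (n : ℝ)⁻¹ * psi x := by
  simp only [gradPsi, psi, PiLp.norm_sq_eq_of_L2, norm_smul, Real.norm_eq_abs,
    mul_pow, sq_abs, ← Finset.mul_sum, mul_inv]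
  ring

theorem norm_gradTot_sub_sq (g : Fin n → Vec d → Vec d) (x y : Blk n d) :
    ‖gradTot g x - gradTot g y‖ ^ 2 = (n : ℝ)⁻¹ ^ 2 * ∑ i, ‖g i (x i) - g i (y i)‖ ^ 2 := by
  simp only [gradTot, PiLp.norm_sq_eq_of_L2, PiLp.sub_apply, ← smul_sub,
    norm_smul, Real.norm_eq_abs, mul_pow, sq_abs, ← Finset.mul_sum]

theorem fTot_sub_sub_inner_gradTot (f : Fin n → Vec d → ℝ) (g : Fin n → Vec d → Vec d)
    (x y : Blk n d) :
    fTot f x - fTot f y - ⟪gradTot g y, x - y⟫ =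
      (n : ℝ)⁻¹ * ∑ i, (f i (x i) - f i (y i) - ⟪g i (y i), x i - y i⟫) := by
  rw [gradTot, PiLp.inner_apply]
  simp only [fTot, PiLp.sub_apply, real_inner_smul_left, Finset.sum_sub_distrib,
    ← Finset.mul_sum]
  ring

theorem fTot_sub_sub_inner_gradTot_nonneg {f : Fin n → Vec d → ℝ} {g : Fin n → Vec d → Vec d}
    (hconv : ∀ i, ConvexOn ℝ Set.univ (f i)) (hgrad : ∀ i x, HasGradientAt (f i) (g i x) x)
    (x y : Blk n d) :
    0 ≤ fTot f x - fTot f y - ⟪gradTot g y, x - y⟫ := by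
  rw [fTot_sub_sub_inner_gradTot]
  refine mul_nonneg (by positivity) (Finset.sum_nonneg fun i _ => ?_)
  linarith [(hconv i).add_inner_le_of_hasGradientAt (hgrad i (y i)) (x i)]

theorem norm_gradTot_sub_sq_le {f : Fin n → Vec d → ℝ} {g : Fin n → Vec d → Vec d} {K : NNReal}
    (hconv : ∀ i, ConvexOn ℝ Set.univ (f i)) (hgrad : ∀ i x, HasGradientAt (f i) (g i x) x)
    (hlip : ∀ i, LipschitzWith K (g i)) (x y : Blk n d) :
    ‖gradTot g x - gradTot g y‖ ^ 2 ≤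
      2 * K * (n : ℝ)⁻¹ * (fTot f x - fTot f y - ⟪gradTot g y, x - y⟫) := by
  have hsum : ∑ i, ‖g i (x i) - g i (y i)‖ ^ 2 ≤
      2 * K * ∑ i, (f i (x i) - f i (y i) - ⟪g i (y i), x i - y i⟫) := by
    rw [Finset.mul_sum]
    exact Finset.sum_le_sum fun i _ =>
      (hconv i).norm_sub_sq_le_of_lipschitzWith (hgrad i) (hlip i) (x i) (y i)
  rw [norm_gradTot_sub_sq, fTot_sub_sub_inner_gradTot]
  calc (n : ℝ)⁻¹ ^ 2 * ∑ i, ‖g i (x i) - g i (y i)‖ ^ 2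
      ≤ (n : ℝ)⁻¹ ^ 2 * (2 * K * ∑ i, (f i (x i) - f i (y i) - ⟪g i (y i), x i - y i⟫)) := by
        gcongr
    _ = _ := by ring

end Blocks

section Stationarity

variable {n d : ℕ}

theorem psi_nonneg (x : Blk n d) : 0 ≤ psi x := by
  unfold psi
  positivity

theorem hasDerivAt_psi_add_smul (x v : Blk n d) :
    HasDerivAt (fun t : ℝ => psi (x + t • v)) ⟪gradPsi x, v⟫ 0 := by
  simp only [psi_add_smul]
  simpa using (((hasDerivAt_id (0 : ℝ)).mul_const ⟪gradPsi x, v⟫).const_add (psi x)).fun_add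
    ((hasDerivAt_pow 2 (0 : ℝ)).mul_const (psi v))

theorem hasDerivAt_fTot_add_smul {f : Fin n → Vec d → ℝ} {g : Fin n → Vec d → Vec d}
    {x : Blk n d} (hgrad : ∀ i, HasGradientAt (f i) (g i (x i)) (x i)) (v : Blk n d) :
    HasDerivAt (fun t : ℝ => fTot f (x + t • v)) ⟪gradTot g x, v⟫ 0 := by
  have hsum : HasDerivAt (fun t : ℝ => ∑ i, f i (x i + t • v i))
      (∑ i, ⟪g i (x i), v i⟫) 0 :=
    HasDerivAt.fun_sum fun i _ => HasGradientAt.hasDerivAt_add_smul (by simpa using hgrad i)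
  rw [gradTot, PiLp.inner_apply]
  simpa only [fTot, PiLp.add_apply, PiLp.smul_apply, real_inner_smul_left, ← Finset.mul_sum]
    using hsum.const_mul (n : ℝ)⁻¹

theorem inner_gradTot_add_mul_inner_gradPsi_eq_zero {f : Fin n → Vec d → ℝ}
    {g : Fin n → Vec d → Vec d} {lam : ℝ} {xstar : Blk n d}
    (hgrad : ∀ i, HasGradientAt (f i) (g i (xstar i)) (xstar i))
    (hmin : ∀ y, FF f lam xstar ≤ FF f lam y) (v : Blk n d) :
    ⟪gradTot g xstar, v⟫ + lam * ⟪gradPsi xstar, v⟫ = 0 := by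
  have hlocal : IsLocalMin (fun t : ℝ => FF f lam (xstar + t • v)) 0 :=
    Filter.Eventually.of_forall fun t => by simpa using hmin (xstar + t • v)
  exact hlocal.hasDerivAt_eq_zero
    ((hasDerivAt_fTot_add_smul hgrad v).add ((hasDerivAt_psi_add_smul xstar v).const_mul lam))

theorem FF_sub_FF_eq_of_forall_le {f : Fin n → Vec d → ℝ} {g : Fin n → Vec d → Vec d}
    {lam : ℝ} {xstar : Blk n d} (hgrad : ∀ i, HasGradientAt (f i) (g i (xstar i)) (xstar i))
    (hmin : ∀ y, FF f lam xstar ≤ FF f lam y) (x : Blk n d) :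
    FF f lam x - FF f lam xstar =
      (fTot f x - fTot f xstar - ⟪gradTot g xstar, x - xstar⟫) + lam * psi (x - xstar) := by
  have hopt := inner_gradTot_add_mul_inner_gradPsi_eq_zero hgrad hmin (x - xstar)
  have hpsi := psi_add_smul xstar (x - xstar) 1
  rw [one_smul, add_sub_cancel, one_mul, one_pow, one_mul] at hpsi
  rw [FF, FF, hpsi]
  linear_combination hopt

end Stationarity

theorem stmt12_general (n d : ℕ) (L lam p : ℝ)
    (hlam : 0 ≤ lam) (hp0 : 0 < p) (hp1 : p < 1)
    (f : Fin n → Vec d → ℝ) (g : Fin n → Vec d → Vec d)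
    (hgrad : ∀ i (x : Vec d), HasGradientAt (f i) (g i x) x)
    (hconv : ∀ i, ConvexOn ℝ Set.univ (f i))
    (hsmooth : ∀ i (x y : Vec d), ‖g i x - g i y‖ ≤ L * ‖x - y‖)
    (xstar : Blk n d) (hxstar : ∀ y : Blk n d, FF f lam xstar ≤ FF f lam y) :
    ∀ x : Blk n d,
      (1 / (1 - p)) * ‖gradTot g x - gradTot g xstar‖ ^ 2 +
          (lam ^ 2 / p) * ‖gradPsi x - gradPsi xstar‖ ^ 2 ≤
        2 * ((n : ℝ)⁻¹ * max (L / (1 - p)) (lam / p)) *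
          (FF f lam x - FF f lam xstar) := by
  intro x
  set M := max (L / (1 - p)) (lam / p)
  have hlip : ∀ i, LipschitzWith L.toNNReal (g i) := fun i =>
    LipschitzWith.of_dist_le_mul fun a b => by
      simpa only [dist_eq_norm] using
        (hsmooth i a b).trans (mul_le_mul_of_nonneg_right (Real.le_coe_toNNReal L) (norm_nonneg _))
  have hLM : L.toNNReal / (1 - p) ≤ M := by
    rcases le_total L 0 with hL | hL
    · rw [Real.toNNReal_of_nonpos hL, NNReal.coe_zero, zero_div]
      exact (div_nonneg hlam hp0.le).trans (le_max_right _ _)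
    · rw [Real.coe_toNNReal L hL]
      exact le_max_left _ _
  have hf := norm_gradTot_sub_sq_le hconv hgrad hlip x xstar
  have hDf := fTot_sub_sub_inner_gradTot_nonneg hconv hgrad x xstar
  have hP := psi_nonneg (x - xstar)
  have h1p : 0 < 1 - p := by linarith
  rw [FF_sub_FF_eq_of_forall_le (fun i => hgrad i _) hxstar, gradPsi_sub, norm_gradPsi_sq]
  set Df := fTot f x - fTot f xstar - ⟪gradTot g xstar, x - xstar⟫
  calc 1 / (1 - p) * ‖gradTot g x - gradTot g xstar‖ ^ 2 +
        lam ^ 2 / p * (2 * (n : ℝ)⁻¹ * psi (x - xstar))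
      ≤ 1 / (1 - p) * (2 * L.toNNReal * (n : ℝ)⁻¹ * Df) +
          lam ^ 2 / p * (2 * (n : ℝ)⁻¹ * psi (x - xstar)) := by
        gcongr
    _ = 2 * (n : ℝ)⁻¹ * (L.toNNReal / (1 - p) * Df + lam / p * (lam * psi (x - xstar))) := by
        ring
    _ ≤ 2 * (n : ℝ)⁻¹ * (M * Df + M * (lam * psi (x - xstar))) := by
        gcongr
        exact le_max_right _ _
    _ = 2 * ((n : ℝ)⁻¹ * M) * (Df + lam * psi (x - xstar)) := by ring

/-- expected smoothness: if each `fᵢ` is differentiable, convex and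
`L`-smooth, `λ ≥ 0`, `0 < p < 1`, `x*` minimizes `F = f + λψ`, and
`𝓛 = (1/n) max{L/(1−p), λ/p}`, then for all `x`:
`(1/(1−p))‖∇f(x) − ∇f(x*)‖² + (λ²/p)‖∇ψ(x) − ∇ψ(x*)‖² ≤ 2𝓛(F(x) − F(x*))`. -/
theorem stmt12 (n d : ℕ) (hn : 0 < n) (L lam p : ℝ)
    (hlam : 0 ≤ lam) (hp0 : 0 < p) (hp1 : p < 1)
    (f : Fin n → Vec d → ℝ) (g : Fin n → Vec d → Vec d)
    (hgrad : ∀ i (x : Vec d), HasGradientAt (f i) (g i x) x)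
    (hconv : ∀ i, ConvexOn ℝ Set.univ (f i))
    (hsmooth : ∀ i (x y : Vec d), ‖g i x - g i y‖ ≤ L * ‖x - y‖)
    (xstar : Blk n d) (hxstar : ∀ y : Blk n d, FF f lam xstar ≤ FF f lam y) :
    ∀ x : Blk n d,
      (1 / (1 - p)) * ‖gradTot g x - gradTot g xstar‖ ^ 2 +
          (lam ^ 2 / p) * ‖gradPsi x - gradPsi xstar‖ ^ 2 ≤
        2 * ((n : ℝ)⁻¹ * max (L / (1 - p)) (lam / p)) *
          (FF f lam x - FF f lam xstar) :=
  stmt12_general n d L lam p hlam hp0 hp1 f g hgrad hconv hsmooth xstar hxstar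
end
end
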